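/- arXiv:1404.3876 — 3 statements merged into one kernel-verified Lean document; each statement's English description precedes it below -/
import Mathlib

section
/- Let M be a d×n real matrix of full row rank d. Then the Lebesgue volume of the zonotope Z(M) equals the sum, over all d-element subsets B ⊆ {1,…,n}, of |det M_B|, where M_B denotes the d×d submatrix of M consisting of the columns indexed by B. -/
/-!
Induct on the number of columns. Both sides scale by `|det T|` under `M ↦ T * M`, so an
invertible `T` may be used to turn the first column into `c • e₀` with `c ≥ 0`. Then
`Z(M) = Z(M') + [0, c • e₀]`, where `M'` drops that column. Every fibre of the convex set `Z(M')`
in direction `e₀` is an interval, and adding `[0, c • e₀]` lengthens each nonempty fibre by `c`;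
by Fubini, `vol Z(M) = vol Z(M') + c • vol (π Z(M'))`, where the projection `π` forgetting the
`e₀`-coordinate maps `Z(M')` onto the zonotope of `M'` without its first row. Laplace expansion
along the first column splits the sum of maximal minors in the same way, according to whether
`B` contains the first column.
-/

open MeasureTheory Set Pointwise Matrix

def zonotope {d n : ℕ} (M : Matrix (Fin d) (Fin n) ℝ) : Set (Fin d → ℝ) :=
  {y | ∃ x : Fin n → ℝ, (∀ i, x i ∈ Set.Icc (0 : ℝ) 1) ∧ y = M.mulVec x}

theorem Real.volume_add_Icc_zero {s : Set ℝ} (hconv : Convex ℝ s) (hcpt : IsCompact s)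
    (hne : s.Nonempty) {c : ℝ} (hc : 0 ≤ c) :
    volume (s + Icc 0 c) = volume s + ENNReal.ofReal c := by
  obtain ⟨a, b, hab, rfl⟩ : ∃ a b, a ≤ b ∧ s = Icc a b :=
    ⟨_, _, csInf_le_csSup hne hcpt.bddBelow hcpt.bddAbove,
      eq_Icc_of_connected_compact (hconv.isConnected hne) hcpt⟩
  have hsum : Icc a b + Icc 0 c = Icc a (b + c) := by
    refine (Icc_add_Icc_subset a b 0 c).trans_eq (by rw [add_zero]) |>.antisymm ?_
    exact ((convex_Icc a b).add (convex_Icc 0 c)).ordConnected.out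
      (by simpa using add_mem_add (left_mem_Icc.2 hab) (left_mem_Icc.2 hc))
      (add_mem_add (right_mem_Icc.2 hab) (right_mem_Icc.2 hc))
  rw [hsum, Real.volume_Icc, Real.volume_Icc, ← ENNReal.ofReal_add (by linarith) hc,
    sub_add_eq_add_sub]

theorem Convex.preimage_prodMk_right {E : Type*} [AddCommGroup E] [Module ℝ E]
    {K : Set (ℝ × E)} (hK : Convex ℝ K) (w : E) :
    Convex ℝ ((fun t => (t, w)) ⁻¹' K) := by
  intro a ha b hb p q hp hq hpq
  simpa [← add_smul, hpq] using hK ha hb hp hq hpq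

theorem preimage_prodMk_add_Icc_prod_zero {E : Type*} [AddZeroClass E]
    (K : Set (ℝ × E)) (c : ℝ) (w : E) :
    (fun t => (t, w)) ⁻¹' (K + Icc 0 c ×ˢ {0}) = (fun t => (t, w)) ⁻¹' K + Icc 0 c := by
  ext t
  simp [mem_add]

theorem volume_prod_add_Icc_prod_zero {E : Type*} [AddCommGroup E] [Module ℝ E]
    [TopologicalSpace E] [ContinuousAdd E] [T2Space E] [MeasurableSpace E] [BorelSpace E]
    (μ : Measure E) [SFinite μ] {K : Set (ℝ × E)}
    (hconv : Convex ℝ K) (hcpt : IsCompact K) {c : ℝ} (hc : 0 ≤ c) :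
    (volume.prod μ) (K + Icc 0 c ×ˢ {0}) =
      volume.prod μ K + ENNReal.ofReal c * μ (Prod.snd '' K) := by
  have hfiber (w : E) : volume ((fun t => (t, w)) ⁻¹' (K + Icc 0 c ×ˢ {0})) =
      volume ((fun t => (t, w)) ⁻¹' K) +
        (Prod.snd '' K).indicator (fun _ => ENNReal.ofReal c) w := by
    rw [preimage_prodMk_add_Icc_prod_zero]
    by_cases hw : w ∈ Prod.snd '' K
    · obtain ⟨⟨t, _⟩, htK, rfl⟩ := hw
      rw [indicator_of_mem (mem_image_of_mem _ htK)]
      refine Real.volume_add_Icc_zero (hconv.preimage_prodMk_right _) ?_ ⟨t, htK⟩ hc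
      exact (hcpt.image continuous_fst).of_isClosed_subset
        (hcpt.isClosed.preimage (by fun_prop)) fun t ht => ⟨_, ht, rfl⟩
    · have hempty : (fun t => (t, w)) ⁻¹' K = ∅ :=
        eq_empty_of_forall_notMem fun t ht => hw ⟨_, ht, rfl⟩
      rw [indicator_of_notMem hw, hempty, empty_add]
      simp
  have hKm : MeasurableSet K := hcpt.measurableSet
  rw [Measure.prod_apply_symm (hcpt.add (isCompact_Icc.prod isCompact_singleton)).measurableSet,
    Measure.prod_apply_symm hKm, lintegral_congr hfiber,
    lintegral_add_left (measurable_measure_prodMk_right hKm),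
    lintegral_indicator_const (hcpt.image continuous_snd).measurableSet]

theorem measurePreserving_consEquivL (d : ℕ) :
    MeasurePreserving (Fin.consEquivL ℝ fun _ : Fin (d + 1) => ℝ) := by
  convert (volume_preserving_piFinSuccAbove (fun _ : Fin (d + 1) => ℝ) 0).symm
  ext p i : 2
  cases i using Fin.cases <;> simp

theorem volume_add_segment_single_zero {d : ℕ} {K : Set (Fin (d + 1) → ℝ)}
    (hconv : Convex ℝ K) (hcpt : IsCompact K) {c : ℝ} (hc : 0 ≤ c) :
    volume (K + segment ℝ 0 (Pi.single 0 c)) =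
      volume K + ENNReal.ofReal c * volume (Fin.tail '' K) := by
  set L := Fin.consEquivL ℝ fun _ : Fin (d + 1) => ℝ
  have hL := measurePreserving_consEquivL d
  have hseg : L.symm '' segment ℝ 0 (Pi.single 0 c) = Icc 0 c ×ˢ {0} := by
    have htail : Fin.tail (Pi.single 0 c : Fin (d + 1) → ℝ) = 0 :=
      funext fun i => Pi.single_eq_of_ne (Fin.succ_ne_zero i) c
    have himage : L.symm '' segment ℝ 0 (Pi.single 0 c) =
        segment ℝ (L.symm 0) (L.symm (Pi.single 0 c)) :=
      image_segment ℝ L.symm.toLinearEquiv.toLinearMap.toAffineMap 0 (Pi.single 0 c)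
    rw [himage]
    simp only [map_zero, L, Fin.consEquivL_symm_apply, Pi.single_eq_same, htail]
    rw [← Prod.mk_zero_zero, ← Prod.image_mk_segment_left, segment_eq_Icc hc, prod_singleton]
  have hsegc : IsCompact (segment ℝ (0 : Fin (d + 1) → ℝ) (Pi.single 0 c)) := by
    rw [segment_eq_image]
    exact isCompact_Icc.image (by fun_prop)
  have hproj : Prod.snd '' (L.symm '' K) = Fin.tail '' K := by
    rw [image_image]
    rfl
  rw [← hL.measure_preimage (hcpt.add hsegc).measurableSet.nullMeasurableSet,
    ← hL.measure_preimage hcpt.measurableSet.nullMeasurableSet,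
    ← L.image_symm_eq_preimage, ← L.image_symm_eq_preimage, image_add, hseg, ← hproj]
  exact volume_prod_add_Icc_prod_zero volume
    (hconv.linear_image L.symm.toLinearEquiv.toLinearMap) (hcpt.image L.symm.continuous) hc

theorem exists_linearEquiv_apply_eq {K V : Type*} [Field K] [AddCommGroup V] [Module K V]
    [FiniteDimensional K V] {v w : V} (hv : v ≠ 0) (hw : w ≠ 0) :
    ∃ g : V ≃ₗ[K] V, g v = w := by
  obtain ⟨g, hg⟩ := Submodule.exists_linearEquiv_restrict_eq
    ((LinearEquiv.coord K V v hv).trans (LinearEquiv.toSpanNonzeroSingleton K V w hw))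
  refine ⟨g, ?_⟩
  simpa [LinearEquiv.coord_self] using (hg ⟨v, Submodule.mem_span_singleton_self v⟩).symm

theorem exists_isUnit_det_mulVec_eq_single {d : ℕ} (v : Fin (d + 1) → ℝ) :
    ∃ T : Matrix (Fin (d + 1)) (Fin (d + 1)) ℝ, IsUnit T.det ∧
      ∃ c, 0 ≤ c ∧ T *ᵥ v = Pi.single 0 c := by
  by_cases hv : v = 0
  · exact ⟨1, by simp, 0, le_rfl, by simp [hv]⟩
  have hsingle : (Pi.single 0 1 : Fin (d + 1) → ℝ) ≠ 0 := by simp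
  obtain ⟨g, hg⟩ := exists_linearEquiv_apply_eq (K := ℝ) hv hsingle
  refine ⟨LinearMap.toMatrix' g, ?_, 1, zero_le_one, ?_⟩
  · rw [LinearMap.det_toMatrix']
    exact g.isUnit_det'
  · rw [LinearMap.toMatrix'_mulVec]
    exact hg

theorem Matrix.det_of_col_zero_eq_single {d : ℕ} {R : Type*} [CommRing R]
    (A : Matrix (Fin (d + 1)) (Fin (d + 1)) R) {c : R}
    (hA : ∀ i, A i 0 = (Pi.single 0 c : Fin (d + 1) → R) i) :
    A.det = c * (A.submatrix Fin.succ Fin.succ).det := by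
  rw [det_succ_column_zero, Fin.sum_univ_succ]
  simp [hA, Fin.succAbove_zero]

section Subsets

open Finset

theorem Finset.powerset_map {α β : Type*} (f : α ↪ β) (s : Finset α) :
    (s.map f).powerset = s.powerset.map (mapEmbedding f).toEmbedding := by
  ext t
  simp [subset_map_iff, eq_comm]

theorem Fin.sum_finset_succ {M : Type*} [AddCommMonoid M] {n : ℕ}
    (g : Finset (Fin (n + 1)) → M) :
    ∑ B, g B = ∑ C : Finset (Fin n), g (C.map (Fin.succEmb n)) +
      ∑ C : Finset (Fin n), g (insert 0 (C.map (Fin.succEmb n))) := by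
  rw [← Finset.powerset_univ, Fin.univ_succ, cons_eq_insert, sum_powerset_insert (by simp)]
  simp only [Finset.powerset_map, sum_map, Finset.powerset_univ]
  rfl

theorem Finset.orderEmbOfFin_map_succEmb {n k : ℕ} (C : Finset (Fin n)) (hC : C.card = k)
    (h : (C.map (Fin.succEmb n)).card = k) :
    ⇑((C.map (Fin.succEmb n)).orderEmbOfFin h) = Fin.succ ∘ C.orderEmbOfFin hC := by
  refine (orderEmbOfFin_unique h (fun i => ?_) ?_).symm
  · exact mem_map_of_mem _ (orderEmbOfFin_mem C hC i)
  · exact Fin.strictMono_succ.comp (C.orderEmbOfFin hC).strictMono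

theorem Finset.orderEmbOfFin_insert_zero_map_succEmb {n k : ℕ} (C : Finset (Fin n))
    (hC : C.card = k) (h : (insert 0 (C.map (Fin.succEmb n))).card = k + 1) :
    ⇑((insert 0 (C.map (Fin.succEmb n))).orderEmbOfFin h) =
      Fin.cons 0 (Fin.succ ∘ C.orderEmbOfFin hC) := by
  refine (orderEmbOfFin_unique h (fun i => ?_) ?_).symm
  · cases i using Fin.cases <;> simp [orderEmbOfFin_mem]
  · exact Fin.strictMono_cons.2 ⟨fun i => Fin.succ_pos _,
      Fin.strictMono_succ.comp (C.orderEmbOfFin hC).strictMono⟩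

end Subsets

section Zonotope

variable {d n : ℕ}

theorem zonotope_eq_image (M : Matrix (Fin d) (Fin n) ℝ) :
    zonotope M = Matrix.toLin' M '' univ.pi fun _ => Icc 0 1 := by
  ext y
  simp only [zonotope, mem_image, mem_univ_pi, toLin'_apply, mem_ofPred_eq, eq_comm]

theorem isCompact_zonotope (M : Matrix (Fin d) (Fin n) ℝ) : IsCompact (zonotope M) := by
  rw [zonotope_eq_image]
  exact (isCompact_univ_pi fun _ => isCompact_Icc).image
    (Matrix.toLin' M).continuous_of_finiteDimensional

theorem convex_zonotope (M : Matrix (Fin d) (Fin n) ℝ) : Convex ℝ (zonotope M) := by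
  rw [zonotope_eq_image]
  exact (convex_pi fun _ _ => convex_Icc 0 1).linear_image _

theorem zonotope_mul (T : Matrix (Fin d) (Fin d) ℝ) (M : Matrix (Fin d) (Fin n) ℝ) :
    zonotope (T * M) = Matrix.toLin' T '' zonotope M := by
  rw [zonotope_eq_image, zonotope_eq_image, Matrix.toLin'_mul, LinearMap.coe_comp, image_comp]

theorem volume_zonotope_mul (T : Matrix (Fin d) (Fin d) ℝ) (M : Matrix (Fin d) (Fin n) ℝ) :
    volume (zonotope (T * M)) = ENNReal.ofReal |T.det| * volume (zonotope M) := by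
  rw [zonotope_mul, Measure.addHaar_image_linearMap, LinearMap.det_toLin']

theorem mulVec_fin_cons (M : Matrix (Fin d) (Fin (n + 1)) ℝ) (t : ℝ) (x : Fin n → ℝ) :
    M *ᵥ Fin.cons t x = M.submatrix id Fin.succ *ᵥ x + t • fun i => M i 0 := by
  ext i
  simp [Matrix.mulVec, dotProduct, Fin.sum_univ_succ, mul_comm, add_comm]

theorem zonotope_eq_add_segment (M : Matrix (Fin d) (Fin (n + 1)) ℝ) :
    zonotope M = zonotope (M.submatrix id Fin.succ) + segment ℝ 0 fun i => M i 0 := by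
  ext y
  simp only [zonotope, segment_eq_image', mem_add, mem_ofPred_eq, mem_image]
  constructor
  · rintro ⟨x, hx, rfl⟩
    rw [← Fin.cons_self_tail x, mulVec_fin_cons]
    exact ⟨_, ⟨_, fun i => hx i.succ, rfl⟩, _, ⟨x 0, hx 0, by simp⟩, rfl⟩
  · rintro ⟨_, ⟨x, hx, rfl⟩, _, ⟨t, ht, rfl⟩, rfl⟩
    refine ⟨Fin.cons t x, fun i => ?_, by simp [mulVec_fin_cons]⟩
    cases i using Fin.cases <;> simp [ht, hx]

theorem image_tail_zonotope (M : Matrix (Fin (d + 1)) (Fin n) ℝ) :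
    Fin.tail '' zonotope M = zonotope (M.submatrix Fin.succ id) := by
  ext y
  simp only [zonotope, mem_image, mem_ofPred_eq]
  constructor
  · rintro ⟨_, ⟨x, hx, rfl⟩, rfl⟩
    exact ⟨x, hx, rfl⟩
  · rintro ⟨x, hx, rfl⟩
    exact ⟨_, ⟨x, hx, rfl⟩, rfl⟩

theorem volume_zonotope_of_fin_zero (M : Matrix (Fin 0) (Fin n) ℝ) :
    volume (zonotope M) = 1 := by
  have huniv : zonotope M = univ :=
    eq_univ_of_forall fun _ => ⟨0, fun _ => left_mem_Icc.2 zero_le_one, Subsingleton.elim _ _⟩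
  simp [huniv, volume_pi]

theorem volume_zonotope_succ {M : Matrix (Fin (d + 1)) (Fin (n + 1)) ℝ} {c : ℝ} (hc : 0 ≤ c)
    (hcol : ∀ i, M i 0 = (Pi.single 0 c : Fin (d + 1) → ℝ) i) :
    volume (zonotope M) = volume (zonotope (M.submatrix id Fin.succ)) +
      ENNReal.ofReal c * volume (zonotope (M.submatrix Fin.succ Fin.succ)) := by
  rw [zonotope_eq_add_segment, funext hcol,
    volume_add_segment_single_zero (convex_zonotope _) (isCompact_zonotope _) hc,
    image_tail_zonotope, submatrix_submatrix, Function.id_comp, Function.comp_id]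

end Zonotope

noncomputable def sumAbsMaxMinors {d n : ℕ} (M : Matrix (Fin d) (Fin n) ℝ) : ℝ :=
  ∑ B : Finset (Fin n), if h : B.card = d then |(M.submatrix id (B.orderEmbOfFin h)).det| else 0

section SumAbsMaxMinors

open Finset

variable {d n : ℕ}

theorem sumAbsMaxMinors_nonneg (M : Matrix (Fin d) (Fin n) ℝ) : 0 ≤ sumAbsMaxMinors M :=
  sum_nonneg fun B _ => by split <;> positivity

theorem sumAbsMaxMinors_mul (T : Matrix (Fin d) (Fin d) ℝ) (M : Matrix (Fin d) (Fin n) ℝ) :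
    sumAbsMaxMinors (T * M) = |T.det| * sumAbsMaxMinors M := by
  rw [sumAbsMaxMinors, sumAbsMaxMinors, mul_sum]
  refine sum_congr rfl fun B _ => ?_
  split
  · rw [submatrix_mul T M id id _ Function.bijective_id, submatrix_id_id, det_mul, abs_mul]
  · rw [mul_zero]

theorem sumAbsMaxMinors_of_fin_zero (M : Matrix (Fin 0) (Fin n) ℝ) : sumAbsMaxMinors M = 1 := by
  rw [sumAbsMaxMinors, sum_eq_single_of_mem ∅ (mem_univ _) fun B _ hB => dif_neg
    (card_ne_zero.2 (nonempty_iff_ne_empty.2 hB))]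
  simp

theorem sumAbsMaxMinors_eq_zero_of_lt (M : Matrix (Fin d) (Fin n) ℝ) (h : n < d) :
    sumAbsMaxMinors M = 0 :=
  sum_eq_zero fun B _ => dif_neg fun hB => (card_le_univ B).not_gt (by simpa [hB] using h)

theorem sumAbsMaxMinors_succ (M : Matrix (Fin (d + 1)) (Fin (n + 1)) ℝ) {c : ℝ}
    (hcol : ∀ i, M i 0 = (Pi.single 0 c : Fin (d + 1) → ℝ) i) :
    sumAbsMaxMinors M = sumAbsMaxMinors (M.submatrix id Fin.succ) +
      |c| * sumAbsMaxMinors (M.submatrix Fin.succ Fin.succ) := by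
  rw [sumAbsMaxMinors, Fin.sum_finset_succ, sumAbsMaxMinors, sumAbsMaxMinors, mul_sum]
  congr 1
  · refine sum_congr rfl fun C _ => ?_
    by_cases hC : C.card = d + 1
    · rw [dif_pos ((card_map _).trans hC), dif_pos hC]
      simp only [submatrix_submatrix, Function.id_comp, orderEmbOfFin_map_succEmb C hC]
    · rw [dif_neg (by rwa [card_map]), dif_neg hC]
  · refine sum_congr rfl fun C _ => ?_
    have hcard : (insert 0 (C.map (Fin.succEmb n))).card = C.card + 1 := by
      rw [card_insert_of_notMem (by simp [Fin.succ_ne_zero]), card_map]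
    by_cases hC : C.card = d
    · rw [dif_pos (hcard.trans (by rw [hC])), dif_pos hC,
        det_of_col_zero_eq_single _ (c := c), abs_mul]
      · simp [orderEmbOfFin_insert_zero_map_succEmb C hC]
      · simp [orderEmbOfFin_insert_zero_map_succEmb C hC, hcol]
    · rw [dif_neg (by omega), dif_neg hC, mul_zero]

end SumAbsMaxMinors

theorem volume_zonotope {d n : ℕ} (M : Matrix (Fin d) (Fin n) ℝ) :
    volume (zonotope M) = ENNReal.ofReal (sumAbsMaxMinors M) := by
  induction n generalizing d with
  | zero =>
    cases d with
    | zero => rw [volume_zonotope_of_fin_zero, sumAbsMaxMinors_of_fin_zero, ENNReal.ofReal_one]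
    | succ d =>
      have hzero : zonotope M = {0} := by
        ext y
        simp [zonotope]
      rw [hzero, measure_singleton, sumAbsMaxMinors_eq_zero_of_lt M d.succ_pos,
        ENNReal.ofReal_zero]
  | succ n ih =>
    cases d with
    | zero => rw [volume_zonotope_of_fin_zero, sumAbsMaxMinors_of_fin_zero, ENNReal.ofReal_one]
    | succ d =>
      obtain ⟨T, hT, c, hc, hTcol⟩ := exists_isUnit_det_mulVec_eq_single fun i => M i 0
      have hcol : ∀ i, (T * M) i 0 = (Pi.single 0 c : Fin (d + 1) → ℝ) i :=
        congrFun hTcol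
      have hTM : volume (zonotope (T * M)) = ENNReal.ofReal (sumAbsMaxMinors (T * M)) := by
        rw [volume_zonotope_succ hc hcol, ih, ih, sumAbsMaxMinors_succ _ hcol, abs_of_nonneg hc,
          ENNReal.ofReal_add (sumAbsMaxMinors_nonneg _)
            (mul_nonneg hc (sumAbsMaxMinors_nonneg _)),
          ENNReal.ofReal_mul hc]
      rw [volume_zonotope_mul, sumAbsMaxMinors_mul, ENNReal.ofReal_mul (abs_nonneg _)] at hTM
      exact (ENNReal.mul_right_inj (by simpa using hT.ne_zero) ENNReal.ofReal_ne_top).1 hTM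

theorem stmt4_general (d n : ℕ) (M : Matrix (Fin d) (Fin n) ℝ) :
    volume (zonotope M) =
      ENNReal.ofReal (∑ B : Finset (Fin n),
        if h : B.card = d then |(M.submatrix id (B.orderEmbOfFin h)).det| else 0) :=
  volume_zonotope M

/-- For a full row rank `d × n` real matrix `M`, the Lebesgue volume of the
zonotope `Z(M)` is the sum, over all `d`-element subsets `B` of the column
indices, of the absolute values `|det M_B|` of the corresponding maximal
minors. -/
theorem stmt4 (d n : ℕ) (M : Matrix (Fin d) (Fin n) ℝ)
    (hrank : M.rank = d) :
    volume (zonotope M) =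
      ENNReal.ofReal (∑ B : Finset (Fin n),
        if h : B.card = d then |(M.submatrix id (B.orderEmbOfFin h)).det| else 0) :=
  stmt4_general d n M
end

section
/- Let M be a d×n integer matrix of rank r all of whose r×r minors lie in {-1,0,1} (a unimodular matrix), and let L = M·Mᵀ. Then the subgroup of ℤ^d generated by the columns of L equals the subgroup of ℤ^d generated by the vectors M·c, where c ranges over the elementary vectors of the real row space of M (equivalently, over the cocircuits of the regular oriented matroid represented by M; the vectors M·c are twice the barycenters of the facets of the centrally symmetric zonotope Z₀(M)). -/
/-!
Choose `r` rows `f` and `r` columns `g` of `M` with `M[f,g]` invertible; by unimodularity its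
determinant is `±1`. The rows of `N = M[f,g]⁻¹ M[f,·]` lie in the row space and restrict to the
identity on `g`, so every vector `x` of the row space is `∑ k, x (g k) • N k`. Hence each row of
`N` has minimal support, and by Cramer's rule its entries are quotients of `r × r` minors, so
it is an elementary vector. The same expansion writes every integer vector of the row space
(each row of `M`, each elementary vector) as an integer combination of the rows of `N`, and the
rows of `N` are integer combinations of the rows of `M` since `M[f,g]⁻¹ = ±adj M[f,g]`. So the
rows of `M` and the elementary vectors generate the same lattice; applying `M` gives the
theorem, the columns of `M Mᵀ` being the images of the rows of `M`.
-/

/-- A vector `v` is an elementary vector of a subspace `W ⊆ ℝⁿ` if it is a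
nonzero vector of `W` with all coordinates in `{-1,0,1}` whose support is
minimal (w.r.t. inclusion) among supports of nonzero vectors of `W`. -/
def IsElementaryVec {n : ℕ} (W : Submodule ℝ (Fin n → ℝ)) (v : Fin n → ℝ) : Prop :=
  v ∈ W ∧ v ≠ 0 ∧ (∀ i, v i ∈ ({-1, 0, 1} : Set ℝ)) ∧
    ∀ w ∈ W, w ≠ 0 → {i | w i ≠ 0} ⊆ {i | v i ≠ 0} → {i | w i ≠ 0} = {i | v i ≠ 0}

open Set Submodule Module Function

theorem exists_linearIndependent_comp_of_finrank_span_eq {K V ι : Type*} [DivisionRing K]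
    [AddCommGroup V] [Module K V] [Finite ι] {v : ι → V} {r : ℕ}
    (h : finrank K (span K (range v)) = r) :
    ∃ f : Fin r → ι, LinearIndependent K (v ∘ f) := by
  obtain ⟨κ, a, ha, hspan, hli⟩ := exists_linearIndependent' K v
  have : Finite κ := Finite.of_injective a ha
  have : Fintype κ := Fintype.ofFinite κ
  have hcard : Fintype.card κ = r := by
    rw [← h, ← hspan, finrank_span_eq_card hli]
  exact ⟨a ∘ (Fintype.equivFinOfCardEq hcard).symm, hli.comp _ (Equiv.injective _)⟩

theorem AddSubgroup.sum_intCast_smul_mem_closure {R V ι : Type*} [Ring R] [AddCommGroup V]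
    [Module R V] [Fintype ι] {a : ι → R} (ha : ∀ i, ∃ z : ℤ, a i = z) (v : ι → V) :
    ∑ i, a i • v i ∈ AddSubgroup.closure (range v) := by
  refine AddSubgroup.sum_mem _ fun i _ => ?_
  obtain ⟨z, hz⟩ := ha i
  rw [hz, Int.cast_smul_eq_zsmul]
  exact AddSubgroup.zsmul_mem _ (AddSubgroup.subset_closure (mem_range_self i)) z

section NegOneZeroOne

variable {K : Type*} [DivisionRing K]

theorem inv_mem_neg_one_zero_one {a : K} (ha : a ∈ ({-1, 0, 1} : Set K)) :
    a⁻¹ ∈ ({-1, 0, 1} : Set K) := by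
  rcases ha with rfl | rfl | rfl <;> simp

theorem mul_mem_neg_one_zero_one {a b : K} (ha : a ∈ ({-1, 0, 1} : Set K))
    (hb : b ∈ ({-1, 0, 1} : Set K)) : a * b ∈ ({-1, 0, 1} : Set K) := by
  rcases ha with rfl | rfl | rfl <;> rcases hb with rfl | rfl | rfl <;> simp

theorem exists_intCast_eq_of_mem_neg_one_zero_one {a : K} (ha : a ∈ ({-1, 0, 1} : Set K)) :
    ∃ z : ℤ, a = z := by
  rcases ha with rfl | rfl | rfl
  exacts [⟨-1, by simp⟩, ⟨0, by simp⟩, ⟨1, by simp⟩]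

end NegOneZeroOne

namespace Matrix

variable {K m n : Type*} [Field K]

theorem exists_isUnit_det_submatrix [Fintype m] [Fintype n] (A : Matrix m n K) {r : ℕ}
    (hr : A.rank = r) :
    ∃ (f : Fin r → m) (g : Fin r → n), IsUnit (A.submatrix f g).det := by
  obtain ⟨f, hf⟩ :=
    exists_linearIndependent_comp_of_finrank_span_eq (A.rank_eq_finrank_span_row.symm.trans hr)
  have hB : (A.submatrix f id)ᵀ.rank = r := by
    rw [rank_transpose, LinearIndependent.rank_matrix (M := A.submatrix f id) hf, Fintype.card_fin]
  obtain ⟨g, hg⟩ := exists_linearIndependent_comp_of_finrank_span_eq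
    ((A.submatrix f id)ᵀ.rank_eq_finrank_span_row.symm.trans hB)
  refine ⟨f, g, ?_⟩
  rw [← det_transpose, ← isUnit_iff_isUnit_det, ← linearIndependent_rows_iff_isUnit]
  exact hg

theorem injective_left_of_isUnit_det_submatrix {r : Type*} [Fintype r] [DecidableEq r]
    {A : Matrix m n K} {f : r → m} {g : r → n} (h : IsUnit (A.submatrix f g).det) :
    Injective f := by
  intro a b hab
  by_contra hne
  exact h.ne_zero (det_zero_of_row_eq hne (by ext j; simp [hab]))

theorem adjugate_apply_intCast {ι : Type*} [Fintype ι] [DecidableEq ι] {A : Matrix ι ι K}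
    (hA : ∀ i j, ∃ z : ℤ, A i j = z) (i j : ι) : ∃ z : ℤ, A.adjugate i j = z := by
  choose Az hAz using hA
  obtain rfl : A = (Int.castRingHom K).mapMatrix (of Az) := by ext; simp [hAz]
  exact ⟨_, congrFun (congrFun ((Int.castRingHom K).map_adjugate _).symm i) j⟩

section FundamentalCocircuits

variable {r : ℕ}

/-- Row `k` is the fundamental cocircuit of the column basis `g`: the vector of the row space
of `M` that is `1` at `g k` and `0` at every other `g l`. -/
noncomputable def fundamentalCocircuits (M : Matrix m n K) (f : Fin r → m) (g : Fin r → n) :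
    Matrix (Fin r) n K :=
  (M.submatrix f g)⁻¹ * M.submatrix f id

variable {M : Matrix m n K} {f : Fin r → m} {g : Fin r → n}

theorem fundamentalCocircuits_row_eq_sum (k : Fin r) :
    M.fundamentalCocircuits f g k = ∑ l, (M.submatrix f g)⁻¹ k l • M (f l) := by
  rw [fundamentalCocircuits, mul_apply_eq_vecMul, vecMul_eq_sum]
  rfl

theorem fundamentalCocircuits_row_mem_span (k : Fin r) :
    M.fundamentalCocircuits f g k ∈ span K (range M) := by
  rw [fundamentalCocircuits_row_eq_sum]
  exact Submodule.sum_mem _ fun l _ => smul_mem _ _ (subset_span (mem_range_self _))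

theorem fundamentalCocircuits_apply_basis (hA : IsUnit (M.submatrix f g).det) (k l : Fin r) :
    M.fundamentalCocircuits f g k (g l) = (1 : Matrix (Fin r) (Fin r) K) k l := by
  have h : (M.fundamentalCocircuits f g).submatrix id g = 1 := by
    rw [fundamentalCocircuits, submatrix_mul _ _ id id g bijective_id, submatrix_id_id,
      submatrix_submatrix]
    exact nonsing_inv_mul _ hA
  rw [← h]
  rfl

theorem sum_smul_fundamentalCocircuits_apply_basis (hA : IsUnit (M.submatrix f g).det)
    (μ : Fin r → K) (l : Fin r) :
    (∑ k, μ k • M.fundamentalCocircuits f g k) (g l) = μ l := by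
  simp [Finset.sum_apply, fundamentalCocircuits_apply_basis hA, one_apply]

theorem span_fundamentalCocircuits [Fintype m] [Fintype n] (hA : IsUnit (M.submatrix f g).det)
    (hr : M.rank = r) :
    span K (range (M.fundamentalCocircuits f g)) = span K (range M) := by
  have hli : LinearIndependent K (M.fundamentalCocircuits f g) :=
    Fintype.linearIndependent_iff.mpr fun μ hμ l => by
      rw [← sum_smul_fundamentalCocircuits_apply_basis hA μ l, hμ, Pi.zero_apply]
  refine eq_of_le_of_finrank_eq (span_le.mpr ?_) ?_
  · rintro _ ⟨k, rfl⟩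
    exact fundamentalCocircuits_row_mem_span k
  · rw [finrank_span_eq_card hli, Fintype.card_fin, ← hr, rank_eq_finrank_span_row]
    rfl

theorem eq_sum_fundamentalCocircuits [Fintype m] [Fintype n] (hA : IsUnit (M.submatrix f g).det)
    (hr : M.rank = r) {x : n → K} (hx : x ∈ span K (range M)) :
    x = ∑ k, x (g k) • M.fundamentalCocircuits f g k := by
  rw [← span_fundamentalCocircuits hA hr] at hx
  obtain ⟨μ, rfl⟩ := (mem_span_range_iff_exists_fun K).mp hx
  simp only [sum_smul_fundamentalCocircuits_apply_basis hA]

end FundamentalCocircuits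

section Unimodular

/-- With `r = M.rank`, this is unimodularity of `M`. -/
def IsUnimodular (M : Matrix m n K) (r : ℕ) : Prop :=
  ∀ (f : Fin r → m) (g : Fin r → n), Injective f → Injective g →
    (M.submatrix f g).det ∈ ({-1, 0, 1} : Set K)

variable {r : ℕ} {M : Matrix m n K} {f : Fin r → m} {g : Fin r → n}

theorem IsUnimodular.det_submatrix_mem (huni : M.IsUnimodular r)
    (hf : Injective f) (g : Fin r → n) : (M.submatrix f g).det ∈ ({-1, 0, 1} : Set K) := by
  by_cases hg : Injective g
  · exact huni f g hf hg
  · obtain ⟨a, b, hab, hne⟩ := not_injective_iff.mp hg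
    rw [det_zero_of_column_eq hne fun i => by simp [hab]]
    simp

theorem fundamentalCocircuits_apply_mem [DecidableEq n] (huni : M.IsUnimodular r)
    (hA : IsUnit (M.submatrix f g).det) (k : Fin r) (j : n) :
    M.fundamentalCocircuits f g k j ∈ ({-1, 0, 1} : Set K) := by
  have hf := injective_left_of_isUnit_det_submatrix hA
  have hcramer : M.fundamentalCocircuits f g k j =
      (M.submatrix f g).det⁻¹ * (M.submatrix f (update g k j)).det := by
    have h := congrFun (det_smul_inv_mulVec_eq_cramer (M.submatrix f g) (fun l => M (f l) j) hA) k
    have hupdate : (M.submatrix f g).updateCol k (fun l => M (f l) j) =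
        M.submatrix f (update g k j) := by
      ext a b
      by_cases hb : b = k <;> simp [hb]
    rw [cramer_apply, hupdate, Pi.smul_apply, smul_eq_mul] at h
    rw [← h, inv_mul_cancel_left₀ hA.ne_zero]
    rfl
  rw [hcramer]
  exact mul_mem_neg_one_zero_one
    (inv_mem_neg_one_zero_one (huni.det_submatrix_mem hf g))
    (huni.det_submatrix_mem hf _)

theorem inv_submatrix_apply_intCast (hint : ∀ i j, ∃ z : ℤ, M i j = z)
    (huni : M.IsUnimodular r) (hA : IsUnit (M.submatrix f g).det) (k l : Fin r) :
    ∃ z : ℤ, (M.submatrix f g)⁻¹ k l = z := by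
  obtain ⟨a, ha⟩ := exists_intCast_eq_of_mem_neg_one_zero_one (inv_mem_neg_one_zero_one
    (huni.det_submatrix_mem (injective_left_of_isUnit_det_submatrix hA) g))
  obtain ⟨b, hb⟩ :=
    adjugate_apply_intCast (A := M.submatrix f g) (fun i j => hint (f i) (g j)) k l
  refine ⟨a * b, ?_⟩
  rw [inv_def, Ring.inverse_eq_inv', smul_apply, smul_eq_mul, ha, hb, Int.cast_mul]

theorem fundamentalCocircuits_row_mem_closure (hint : ∀ i j, ∃ z : ℤ, M i j = z)
    (huni : M.IsUnimodular r) (hA : IsUnit (M.submatrix f g).det) (k : Fin r) :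
    M.fundamentalCocircuits f g k ∈ AddSubgroup.closure (range M) := by
  rw [fundamentalCocircuits_row_eq_sum]
  exact AddSubgroup.closure_mono (range_comp_subset_range f M)
    (AddSubgroup.sum_intCast_smul_mem_closure (inv_submatrix_apply_intCast hint huni hA k) _)

theorem mem_closure_fundamentalCocircuits [Fintype m] [Fintype n]
    (hA : IsUnit (M.submatrix f g).det) (hr : M.rank = r) {x : n → K}
    (hx : x ∈ span K (range M)) (hxint : ∀ j, ∃ z : ℤ, x j = z) :
    x ∈ AddSubgroup.closure (range (M.fundamentalCocircuits f g)) := by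
  rw [eq_sum_fundamentalCocircuits hA hr hx]
  exact AddSubgroup.sum_intCast_smul_mem_closure (fun k => hxint (g k)) _

end Unimodular

end Matrix

open Matrix

section Elementary

variable {m : Type*} [Fintype m] {n r : ℕ} {M : Matrix m (Fin n) ℝ}

theorem isElementaryVec_fundamentalCocircuits {f : Fin r → m} {g : Fin r → Fin n}
    (hr : M.rank = r) (huni : M.IsUnimodular r) (hA : IsUnit (M.submatrix f g).det) (k : Fin r) :
    IsElementaryVec (span ℝ (range M)) (M.fundamentalCocircuits f g k) := by
  set N := M.fundamentalCocircuits f g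
  have hNk : N k (g k) = 1 := by simp [N, fundamentalCocircuits_apply_basis hA]
  refine ⟨fundamentalCocircuits_row_mem_span k, fun h => by simp [h] at hNk,
    fundamentalCocircuits_apply_mem huni hA k, fun w hw hw0 hsupp => ?_⟩
  have hwg : ∀ l, l ≠ k → w (g l) = 0 := fun l hl => by
    by_contra h
    exact hsupp h (by simp [N, fundamentalCocircuits_apply_basis hA, one_apply_ne' hl])
  have hw_eq : w = w (g k) • N k := (eq_sum_fundamentalCocircuits hA hr hw).trans
    (Finset.sum_eq_single k (fun l _ hl => by rw [hwg l hl, zero_smul]) (by simp))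
  have hc : w (g k) ≠ 0 := fun h => hw0 (by rw [hw_eq, h, zero_smul])
  rw [hw_eq]
  ext i
  simp [hc]

theorem closure_rows_eq_closure_isElementaryVec (hint : ∀ i j, ∃ z : ℤ, M i j = z)
    (hr : M.rank = r) (huni : M.IsUnimodular r) :
    AddSubgroup.closure (range M) =
      AddSubgroup.closure {c | IsElementaryVec (span ℝ (range M)) c} := by
  obtain ⟨f, g, hA⟩ := M.exists_isUnit_det_submatrix hr
  have hcocircuits :
      range (M.fundamentalCocircuits f g) ⊆ {c | IsElementaryVec (span ℝ (range M)) c} := by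
    rintro _ ⟨k, rfl⟩
    exact isElementaryVec_fundamentalCocircuits hr huni hA k
  apply le_antisymm
  · rw [AddSubgroup.closure_le]
    rintro _ ⟨i, rfl⟩
    exact AddSubgroup.closure_mono hcocircuits
      (mem_closure_fundamentalCocircuits hA hr (subset_span (mem_range_self i)) (hint i))
  · rw [AddSubgroup.closure_le]
    intro c hc
    refine (AddSubgroup.closure_le _).mpr ?_ (mem_closure_fundamentalCocircuits hA hr hc.1
      fun j => exists_intCast_eq_of_mem_neg_one_zero_one (hc.2.2.1 j))
    rintro _ ⟨k, rfl⟩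
    exact fundamentalCocircuits_row_mem_closure hint huni hA k

end Elementary

/-- For a rank `r` unimodular integer matrix `M` with `L = M Mᵀ`, the subgroup
of `ℤ^d` generated by the columns of `L` equals the subgroup generated by the
vectors `M·c` as `c` ranges over the elementary vectors of the row space of `M`
(the cocircuits of the regular oriented matroid represented by `M`; the `M·c`
are twice the barycenters of the facets of the centered zonotope `Z₀(M)`). -/
theorem stmt8 (d n r : ℕ) (M : Matrix (Fin d) (Fin n) ℝ)
    (hint : ∀ i j, ∃ z : ℤ, M i j = (z : ℝ))
    (hrank : M.rank = r)
    (huni : ∀ (f : Fin r → Fin d) (g : Fin r → Fin n),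
      Function.Injective f → Function.Injective g →
      (M.submatrix f g).det ∈ ({-1, 0, 1} : Set ℝ))
    (L : Matrix (Fin d) (Fin d) ℝ) (hLdef : L = M * M.transpose) :
    AddSubgroup.closure (Set.range (fun j => fun i => L i j)) =
      AddSubgroup.closure
        {y : Fin d → ℝ | ∃ c : Fin n → ℝ,
          IsElementaryVec (Submodule.span ℝ (Set.range (fun i => M i))) c ∧
          y = M.mulVec c} := by
  subst hLdef
  have hcols : range (fun j i => (M * Mᵀ) i j) = M.mulVecLin.toAddMonoidHom '' range M :=
    range_comp M.mulVecLin.toAddMonoidHom M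
  have helem : {y | ∃ c, IsElementaryVec (span ℝ (range M)) c ∧ y = M *ᵥ c} =
      M.mulVecLin.toAddMonoidHom '' {c | IsElementaryVec (span ℝ (range M)) c} := by
    ext y
    simp [eq_comm]
  rw [hcols, helem, ← AddMonoidHom.map_closure, ← AddMonoidHom.map_closure,
    closure_rows_eq_closure_isElementaryVec hint hrank huni]
end

section
/- Let b₁, …, bₙ be a basis of ℝⁿ (n points that linearly span ℝⁿ), let β = (1/n)·(b₁ + ⋯ + bₙ) be their barycenter, let Π be the zonotope generated by b₁, …, bₙ, and let P be the zonotope generated by the n+1 vectors β, b₁ − β, …, bₙ − β. Then the Lebesgue volume of Π equals the Lebesgue volume of P. -/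
open MeasureTheory

/-- The zonotope generated by a finite family of vectors `v : Fin k → ℝⁿ`:
the Minkowski sum of the segments from `0` to each `v i`. -/
def zonotopeFam {n k : ℕ} (v : Fin k → (Fin n → ℝ)) : Set (Fin n → ℝ) :=
  {y | ∃ t : Fin k → ℝ, (∀ i, t i ∈ Set.Icc (0 : ℝ) 1) ∧ y = ∑ i, t i • v i}

/-!
Both zonotopes are images, under the linear map `eᵢ ↦ bᵢ`, of the corresponding zonotopes for
the standard basis `e`, so it suffices to show that the zonotope `P₀` generated by
`u = (1/n) ∑ eᵢ` and the `eᵢ - u` has volume one. Since `∑ (eᵢ - u) = 0`, the coefficients of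
the `eᵢ - u` may be shifted until the smallest one, say the `j`-th, vanishes. Hence `P₀` is the
union of the `n` parallelepipeds `Qⱼ` spanned by `u` and the `eᵢ - u` for `i ≠ j`. Each `Qⱼ` has
volume `|det| = 1/n`, and a point of `Qⱼ` has its smallest coordinate at `j`, so distinct `Qⱼ`
meet only inside hyperplanes `xⱼ = xₖ`.
-/

open Function

theorem zonotopeFam_eq_parallelepiped {n k : ℕ} (v : Fin k → Fin n → ℝ) :
    zonotopeFam v = parallelepiped v := by
  ext x
  simp [zonotopeFam, mem_parallelepiped_iff, Set.mem_Icc, Pi.le_def, forall_and]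

section Parallelepiped

variable {ι E : Type*} [Fintype ι] [AddCommGroup E] [Module ℝ E]

theorem isCompact_parallelepiped [TopologicalSpace E] [IsTopologicalAddGroup E]
    [ContinuousSMul ℝ E] (v : ι → E) : IsCompact (parallelepiped v) :=
  isCompact_Icc.image (by fun_prop)

theorem parallelepiped_subset_setOf_nonneg (φ : E →ₗ[ℝ] ℝ) (v : ι → E)
    (hv : ∀ i, 0 ≤ φ (v i)) : parallelepiped v ⊆ {x | 0 ≤ φ x} := by
  intro x hx
  obtain ⟨t, ht, rfl⟩ := (mem_parallelepiped_iff v x).1 hx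
  simp only [Set.mem_ofPred_eq, map_sum, map_smul, smul_eq_mul]
  exact Finset.sum_nonneg fun i _ => mul_nonneg (ht.1 i) (hv i)

theorem Fintype.sum_update_smul_update [DecidableEq ι] (c : ι → ℝ) (w : ι → E) (j : ι) (s : ℝ)
    (v : E) : ∑ i, update c j s i • update w j v i = s • v + ∑ i, update c j 0 i • w i := by
  have key : ∀ a x, ∑ i, update c j a i • update w j x i =
      a • x + ∑ i ∈ Finset.univ \ {j}, c i • w i := fun a x => by
    simp only [apply_update₂ (fun _ (r : ℝ) (y : E) => r • y),
      Finset.sum_update_of_mem (Finset.mem_univ j)]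
  conv_rhs => rw [← update_eq_self j w, key, zero_smul, zero_add]
  exact key s v

theorem parallelepiped_cons_eq_iUnion {n : ℕ} [NeZero n] (v₀ : E) (w : Fin n → E)
    (hw : ∑ i, w i = 0) :
    parallelepiped (Fin.cons v₀ w : Fin (n + 1) → E) = ⋃ j, parallelepiped (update w j v₀) := by
  ext x
  simp only [mem_parallelepiped_iff, Set.mem_iUnion, Fin.sum_univ_succ, Fin.cons_zero,
    Fin.cons_succ, Set.mem_Icc, Pi.le_def, Pi.zero_apply, Pi.one_apply, ← forall_and]
  constructor
  · rintro ⟨t, ht, rfl⟩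
    obtain ⟨j, hj⟩ := Finite.exists_min (fun i : Fin n => t i.succ)
    refine ⟨j, update (fun i => t i.succ - t j.succ) j (t 0), fun i => ?_, ?_⟩
    · rcases eq_or_ne i j with rfl | hi
      · simpa using ht 0
      · simp only [update_of_ne hi]
        constructor <;> linarith [hj i, (ht i.succ).2, (ht j.succ).1]
    · rw [Fintype.sum_update_smul_update, update_eq_self_iff.mpr (sub_self _).symm]
      simp only [sub_smul, Finset.sum_sub_distrib, ← Finset.smul_sum, hw, smul_zero, sub_zero]
  · rintro ⟨j, t, ht, rfl⟩
    refine ⟨Fin.cons (t j) (update t j 0), fun i => ?_, ?_⟩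
    · refine Fin.cases (by simpa using ht j) (fun i => ?_) i
      rcases eq_or_ne i j with rfl | hi
      · simp
      · simpa [hi] using ht i
    · simp only [Fin.cons_zero, Fin.cons_succ]
      conv_lhs => rw [← update_eq_self j t, Fintype.sum_update_smul_update]

end Parallelepiped

theorem volume_parallelepiped_eq_abs_det {ι : Type*} [Fintype ι] [DecidableEq ι]
    (v : ι → ι → ℝ) : volume (parallelepiped v) = ENNReal.ofReal |(Matrix.of v).det| := by
  have h : (Pi.basisFun ℝ ι).addHaar = volume := by
    rw [Module.Basis.addHaar_eq_iff, Module.Basis.parallelepiped_basisFun]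
    simp [TopologicalSpace.PositiveCompacts.piIcc01, Real.volume_Icc_pi]
  rw [← h, Measure.addHaar_parallelepiped, Pi.basisFun_det_apply]

theorem volume_setOf_apply_eq_apply {ι : Type*} [Fintype ι] {j k : ι} (hjk : j ≠ k) :
    volume {x : ι → ℝ | x j = x k} = 0 := by
  classical
  let φ : (ι → ℝ) →ₗ[ℝ] ℝ := LinearMap.proj (R := ℝ) (φ := fun _ : ι => ℝ) j - LinearMap.proj k
  have hφ : φ ≠ 0 := fun h => by simpa [φ, hjk] using LinearMap.congr_fun h (Pi.single j 1)
  convert Measure.addHaar_submodule volume (LinearMap.ker φ) (mt LinearMap.ker_eq_top.1 hφ)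
  ext x
  simp [φ, sub_eq_zero]

theorem Matrix.det_of_update_sub_barycenter {K : Type*} [Field K] {n : ℕ} (b : Fin n → Fin n → K)
    (j : Fin n) :
    (Matrix.of (update (fun i => b i - (n : K)⁻¹ • ∑ k, b k) j ((n : K)⁻¹ • ∑ k, b k))).det =
      (n : K)⁻¹ * (Matrix.of b).det := by
  set β := (n : K)⁻¹ • ∑ k, b k
  have hrow : (Matrix.of (update b j β)).det =
      (Matrix.of (update (fun i => b i - β) j β)).det := by
    refine Matrix.det_eq_of_forall_row_eq_smul_add_const (fun i => if i = j then 0 else 1) j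
      (by simp) fun i k => ?_
    rcases eq_or_ne i j with rfl | hi
    · simp
    · simp [hi]
  rw [← hrow, show β = ∑ k, (n : K)⁻¹ • b k from Finset.smul_sum]
  exact Matrix.det_updateRow_sum (Matrix.of b) j (fun _ => (n : K)⁻¹)

section StandardBasis

variable (n : ℕ)

local notation "e" => Pi.basisFun ℝ (Fin n)

local notation "u" => (n : ℝ)⁻¹ • ∑ k, Pi.basisFun ℝ (Fin n) k

theorem parallelepiped_update_basisFun_sub_barycenter_subset (j : Fin n) :
    parallelepiped (update (fun i => e i - u) j u) ⊆ {x | ∀ i, x j ≤ x i} := by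
  intro x hx i
  have := parallelepiped_subset_setOf_nonneg
    (LinearMap.proj (R := ℝ) (φ := fun _ : Fin n => ℝ) i - LinearMap.proj j) _ (fun l => ?_) hx
  · simpa using this
  rcases eq_or_ne l j with rfl | hl
  · simp
  · simp [hl, Pi.single_apply]
    positivity

theorem volume_parallelepiped_cons_basisFun_barycenter :
    volume (parallelepiped (Fin.cons u (fun i => e i - u) : Fin (n + 1) → Fin n → ℝ)) = 1 := by
  obtain rfl | hn := eq_or_ne n 0
  · rw [Set.Nonempty.eq_univ ⟨0, (mem_parallelepiped_iff _ _).2 ⟨0, by simp⟩⟩]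
    simp [volume_pi]
  have : NeZero n := ⟨hn⟩
  have hsum : ∑ i, (e i - u) = 0 := by
    rw [Finset.sum_sub_distrib, Finset.sum_const, Finset.card_univ, Fintype.card_fin,
      ← Nat.cast_smul_eq_nsmul ℝ, smul_inv_smul₀ (Nat.cast_ne_zero.2 hn), sub_self]
  have hdisj :
      Pairwise (AEDisjoint volume on fun j => parallelepiped (update (fun i => e i - u) j u)) :=
    fun j k hjk => measure_mono_null (fun x hx => le_antisymm
      (parallelepiped_update_basisFun_sub_barycenter_subset n j hx.1 k)
      (parallelepiped_update_basisFun_sub_barycenter_subset n k hx.2 j))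
      (volume_setOf_apply_eq_apply hjk)
  have hvol : ∀ j, volume (parallelepiped (update (fun i => e i - u) j u)) =
      ENNReal.ofReal (n : ℝ)⁻¹ := fun j => by
    rw [volume_parallelepiped_eq_abs_det, Matrix.det_of_update_sub_barycenter,
      ← Pi.basisFun_det_apply, Module.Basis.det_self, mul_one, abs_of_nonneg (by positivity)]
  rw [parallelepiped_cons_eq_iUnion _ _ hsum, measure_iUnion₀ hdisj
    (fun j => (isCompact_parallelepiped _).isClosed.measurableSet.nullMeasurableSet),
    tsum_fintype, Fintype.sum_congr _ _ hvol, Finset.sum_const, Finset.card_univ,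
    Fintype.card_fin, nsmul_eq_mul, ← ENNReal.ofReal_natCast, ← ENNReal.ofReal_mul (by positivity),
    mul_inv_cancel₀ (Nat.cast_ne_zero.2 hn), ENNReal.ofReal_one]

end StandardBasis

theorem stmt14_general (n : ℕ) (b : Fin n → (Fin n → ℝ))
    (β : Fin n → ℝ) (hβ : β = (n : ℝ)⁻¹ • ∑ i, b i) :
    volume (zonotopeFam b) =
      volume (zonotopeFam (Fin.cons β (fun i => b i - β) : Fin (n + 1) → (Fin n → ℝ))) := by
  set e := Pi.basisFun ℝ (Fin n)
  set B := e.constr ℝ b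
  have hBe : ∀ i, B (e i) = b i := e.constr_basis ℝ b
  have hBcons : ⇑B ∘ (Fin.cons ((n : ℝ)⁻¹ • ∑ k, e k) (fun i => e i - (n : ℝ)⁻¹ • ∑ k, e k) :
      Fin (n + 1) → Fin n → ℝ) = Fin.cons β (fun i => b i - β) := by
    ext i : 1
    refine Fin.cases ?_ (fun i => ?_) i <;>
      simp only [comp_apply, Fin.cons_zero, Fin.cons_succ, map_sub, map_smul, map_sum, hBe, hβ]
  rw [zonotopeFam_eq_parallelepiped, zonotopeFam_eq_parallelepiped, ← hBcons, ← funext hBe,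
    ← comp_def, ← image_parallelepiped, ← image_parallelepiped, Measure.addHaar_image_linearMap,
    Measure.addHaar_image_linearMap, volume_parallelepiped_cons_basisFun_barycenter,
    volume_parallelepiped_eq_abs_det, ← Pi.basisFun_det_apply, Module.Basis.det_self, abs_one,
    ENNReal.ofReal_one]

/-- If `b₁, …, bₙ` linearly span `ℝⁿ` with barycenter `β`, then the zonotope
`Π` generated by `b₁, …, bₙ` and the zonotope `P` generated by the `n+1`
vectors `β, b₁ − β, …, bₙ − β` have the same Lebesgue volume. -/
theorem stmt14 (n : ℕ) (b : Fin n → (Fin n → ℝ))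
    (hb : Submodule.span ℝ (Set.range b) = ⊤)
    (β : Fin n → ℝ) (hβ : β = (n : ℝ)⁻¹ • ∑ i, b i) :
    volume (zonotopeFam b) =
      volume (zonotopeFam (Fin.cons β (fun i => b i - β) : Fin (n + 1) → (Fin n → ℝ))) :=
  stmt14_general n b β hβ
end
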